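/- Hivert–Nzeutchap criterion: if ≡ is a congruence on A* compatible with restriction to alphabet intervals and with the destandardization process, then the family {P_ĉ := Σ_{σ ∈ ĉ} F_σ}, indexed by the ≡-classes ĉ of permutations, spans a Hopf subalgebra of FQSym. -/

import Mathlib

open scoped Classical

/-- Baxter adjacency relations on words over the alphabet of natural numbers. -/
def BaxterAdj (w w' : List ℕ) : Prop :=
  (∃ (a b c d : ℕ) (u v : List ℕ), a ≤ b ∧ b < c ∧ c ≤ d ∧
      w = c :: (u ++ a :: d :: (v ++ [b])) ∧ w' = c :: (u ++ d :: a :: (v ++ [b]))) ∨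
  (∃ (a b c d : ℕ) (u v : List ℕ), a < b ∧ b ≤ c ∧ c < d ∧
      w = b :: (u ++ d :: a :: (v ++ [c])) ∧ w' = b :: (u ++ a :: d :: (v ++ [c])))

/-- One rewriting step: an adjacency applied inside a word (congruence context). -/
def BaxterStep (w w' : List ℕ) : Prop :=
  ∃ (p s u v : List ℕ), BaxterAdj u v ∧ w = p ++ u ++ s ∧ w' = p ++ v ++ s

/-- The Baxter congruence: the equivalence generated by the Baxter steps. -/
def BaxterEquiv : List ℕ → List ℕ → Prop := Relation.EqvGen BaxterStep

/-- Sylvester adjacency: a c u b ≡ c a u b when a ≤ b < c. -/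
def SylvAdj (w w' : List ℕ) : Prop :=
  ∃ (a b c : ℕ) (u : List ℕ), a ≤ b ∧ b < c ∧
    w = a :: c :: (u ++ [b]) ∧ w' = c :: a :: (u ++ [b])

def SylvStep (w w' : List ℕ) : Prop :=
  ∃ (p s u v : List ℕ), SylvAdj u v ∧ w = p ++ u ++ s ∧ w' = p ++ v ++ s

def SylvEquiv : List ℕ → List ℕ → Prop := Relation.EqvGen SylvStep

/-- #-sylvester adjacency: b u a c ≡ b u c a when a < b ≤ c. -/
def SylvHAdj (w w' : List ℕ) : Prop :=
  ∃ (a b c : ℕ) (u : List ℕ), a < b ∧ b ≤ c ∧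
    w = b :: (u ++ [a, c]) ∧ w' = b :: (u ++ [c, a])

def SylvHStep (w w' : List ℕ) : Prop :=
  ∃ (p s u v : List ℕ), SylvHAdj u v ∧ w = p ++ u ++ s ∧ w' = p ++ v ++ s

def SylvHEquiv : List ℕ → List ℕ → Prop := Relation.EqvGen SylvHStep

/-- The standardized word of `u`: position `i` receives the rank of the letter `u i`
(ties broken from left to right), ranks starting at `1`. -/
def std (u : List ℕ) : List ℕ :=
  (List.range u.length).map fun i =>
    ((List.range u.length).filter fun j =>
      decide (u.getD j 0 < u.getD i 0 ∨ (u.getD j 0 = u.getD i 0 ∧ j < i))).length + 1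

/-- The maximal letter of a word. -/
def wordMax (u : List ℕ) : ℕ := u.foldr max 0

/-- The Schützenberger transformation: reverse and complement each letter w.r.t. max + 1. -/
def schutz (u : List ℕ) : List ℕ := u.reverse.map fun x => wordMax u + 1 - x

/-- Labeled binary trees. -/
inductive BT where
  | leaf : BT
  | node : BT → ℕ → BT → BT
deriving DecidableEq

/-- Leaf insertion into a left binary search tree. -/
def leafInsL : BT → ℕ → BT
  | .leaf, a => .node .leaf a .leaf
  | .node l b r, a => if a < b then .node (leafInsL l a) b r else .node l b (leafInsL r a)

/-- Leaf insertion into a right binary search tree. -/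
def leafInsR : BT → ℕ → BT
  | .leaf, a => .node .leaf a .leaf
  | .node l b r, a => if a ≤ b then .node (leafInsR l a) b r else .node l b (leafInsR r a)

/-- The lower restricted tree `T_{≤ a}` of a right binary search tree. -/
def splitLE : BT → ℕ → BT
  | .leaf, _ => .leaf
  | .node l b r, a => if b ≤ a then .node l b (splitLE r a) else splitLE l a

/-- The higher restricted tree `T_{> a}` of a right binary search tree. -/
def splitGT : BT → ℕ → BT
  | .leaf, _ => .leaf
  | .node l b r, a => if b ≤ a then splitGT r a else .node (splitGT l a) b r

/-- Root insertion into a right binary search tree. -/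
def rootIns (t : BT) (a : ℕ) : BT := .node (splitLE t a) a (splitGT t a)

/-- The left tree of the P-symbol: leaf insertions from left to right. -/
def insL (u : List ℕ) : BT := u.foldl leafInsL .leaf

/-- The right tree of the P-symbol: root insertions from left to right. -/
def insR (u : List ℕ) : BT := u.foldl rootIns .leaf

/-- The P-symbol of a word. -/
def Psymb (u : List ℕ) : BT × BT := (insL u, insR u)

/-- Unlabeled binary trees. -/
inductive UBT where
  | leaf : UBT
  | node : UBT → UBT → UBT
deriving DecidableEq

/-- The shape of a labeled binary tree. -/
def shape : BT → UBT
  | .leaf => .leaf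
  | .node l _ r => .node (shape l) (shape r)

/-- The shape of the P-symbol of a word. -/
def Pshape (u : List ℕ) : UBT × UBT := (shape (insL u), shape (insR u))

/-- Number of internal nodes. -/
def sizeU : UBT → ℕ
  | .leaf => 0
  | .node l r => sizeU l + sizeU r + 1

/-- Orientations of the leaves, from left to right: `true` means right-oriented
(the leaf is the right child of its parent); the parameter is the orientation
assigned if the tree is reduced to a leaf. -/
def loU : UBT → Bool → List Bool
  | .leaf, b => [b]
  | .node l r, _ => loU l false ++ loU r true

/-- Leaf orientations of a labeled binary tree. -/
def loB : BT → Bool → List Bool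
  | .leaf, b => [b]
  | .node l _ r, _ => loB l false ++ loB r true

/-- The canopy: orientations of the leaves except the first and the last one. -/
def canU (t : UBT) : List Bool := ((loU t false).drop 1).dropLast

/-- A pair of twin binary trees: same number of nodes and complementary canopies. -/
def IsTwin (J : UBT × UBT) : Prop :=
  sizeU J.1 = sizeU J.2 ∧ (canU J.1).length = (canU J.2).length ∧
    ∀ i < (canU J.1).length, (canU J.1).getD i false ≠ (canU J.2).getD i false

/-- `σ` is (the word of) a permutation of `{1, …, n}`. -/
def IsPerm (n : ℕ) (σ : List ℕ) : Prop := σ.Perm (List.range' 1 n)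

/-- Covering-type step of the right permutohedron (weak) order: exchange of two
adjacent letters `a < b`. -/
def PermutoStep (σ ν : List ℕ) : Prop :=
  ∃ (p s : List ℕ) (a b : ℕ), a < b ∧ σ = p ++ a :: b :: s ∧ ν = p ++ b :: a :: s

/-- The right permutohedron (weak) order. -/
def PermutoLe : List ℕ → List ℕ → Prop := Relation.ReflTransGen PermutoStep

/-- Baxter permutations: avoiding the generalized patterns 2-41-3 and 3-14-2. -/
def IsBaxterPerm (σ : List ℕ) : Prop :=
  ∀ i j k, i < j → j + 1 < k → k < σ.length →
    ¬(σ.getD (j+1) 0 < σ.getD i 0 ∧ σ.getD i 0 < σ.getD k 0 ∧ σ.getD k 0 < σ.getD j 0) ∧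
    ¬(σ.getD j 0 < σ.getD k 0 ∧ σ.getD k 0 < σ.getD i 0 ∧ σ.getD i 0 < σ.getD (j+1) 0)

/-- The free quasi-symmetric functions, modeled as finitely supported functions
on words (the fundamental basis element `F_σ` is `Finsupp.single σ 1`). -/
abbrev FQSym := List ℕ →₀ ℚ

/-- Model for `FQSym ⊗ FQSym`. -/
abbrev FQSym2 := (List ℕ × List ℕ) →₀ ℚ

/-- The list of shuffles of two words. -/
def shuffles : List ℕ → List ℕ → List (List ℕ)
  | [], v => [v]
  | u, [] => [u]
  | a :: u, b :: v =>
      (shuffles u (b :: v)).map (a :: ·) ++ (shuffles (a :: u) v).map (b :: ·)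
termination_by u v => u.length + v.length
decreasing_by all_goals (simp; try omega)

/-- The shifted shuffle of two permutations. -/
def shShuffles (σ ν : List ℕ) : List (List ℕ) := shuffles σ (ν.map (· + σ.length))

/-- The product of FQSym on the fundamental basis: shifted shuffle. -/
noncomputable def fqMul (x y : FQSym) : FQSym :=
  x.sum fun σ a => y.sum fun ν b =>
    ((shShuffles σ ν).map fun π => Finsupp.single π (a * b)).sum

/-- The coproduct of FQSym: deconcatenation followed by standardization. -/
noncomputable def fqCoprod (x : FQSym) : FQSym2 :=
  x.sum fun σ a =>
    ((List.range (σ.length + 1)).map fun i =>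
      Finsupp.single (std (σ.take i), std (σ.drop i)) a).sum

/-- The tensor product of two elements of FQSym, in the model `FQSym2`. -/
noncomputable def fqTensor (x y : FQSym) : FQSym2 :=
  x.sum fun σ a => y.sum fun ν b => Finsupp.single (σ, ν) (a * b)

/-- All permutations of `{1, …, n}` as words. -/
def permsOf (n : ℕ) : List (List ℕ) := (List.range' 1 n).permutations

/-- The basis element `P_J` of Baxter: the sum of `F_σ` over the permutations
of size `n` whose P-symbol has shape `J`. -/
noncomputable def PJ (n : ℕ) (J : UBT × UBT) : FQSym :=
  (((permsOf n).filter fun σ => decide (Pshape σ = J)).map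
    fun σ => Finsupp.single σ (1 : ℚ)).sum

/-- The sum of the `F_τ` over the permutations `τ` of size `n` that are
`E`-equivalent to `σ`. -/
noncomputable def Pclass (E : List ℕ → List ℕ → Prop) (n : ℕ) (σ : List ℕ) : FQSym :=
  (((permsOf n).filter fun τ => decide (E σ τ)).map
    fun τ => Finsupp.single τ (1 : ℚ)).sum

/-!
For the product, `F_σ F_ν` is the sum of the `F_π`, `π` a permutation of size `n + m` whose
restriction to the letters `≤ n` is `σ` and whose restriction to the letters `> n`, shifted down by
`n`, is `ν`. Hence `P_c P_d` is the sum of the `F_π` whose two restrictions lie in `c` and `d`, and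
compatibility with restriction to the intervals `[1, n]` and `(n, ∞)` (together with
destandardization, for the shift) makes this set of permutations a union of classes.

For the coproduct, group the terms `F_{std u} ⊗ F_{std v}` of `Δ P_c`, `π = u v ∈ c`, by the cut
position and by the letter sets of `u` and `v`. A word without repeated letters is determined by its
letters and its standardization, so within a group the map `π ↦ (std u, std v)` is injective. Its
image is a union of products of classes: if `std u ≡ α`, destandardizing `α` with the letters of `u`
gives `u' ≡ u`, likewise `v' ≡ v`, and `u' v' ≡ u v` lies in `c` and in the same group.
-/

namespace List

theorem countP_getD_range (u : List ℕ) (p : ℕ → Bool) :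
    (range u.length).countP (fun j => p (u.getD j 0)) = u.countP p := by
  have hu : (range u.length).map (fun j => u.getD j 0) = u :=
    ext_getElem (by simp) fun i _ h => by simp [h]
  conv_rhs => rw [← hu]
  rw [countP_map]
  rfl

theorem countP_lt_range'_one {n x : ℕ} (hx1 : 1 ≤ x) (hx : x ≤ n + 1) :
    (range' 1 n).countP (· < x) = x - 1 := by
  obtain ⟨k, rfl⟩ : ∃ k, n = x - 1 + k := ⟨n + 1 - x, by omega⟩
  rw [← range'_append (step := 1), countP_append, countP_eq_length.mpr, countP_eq_zero.mpr]
  · simp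
  · intro a ha
    rw [mem_range'_1] at ha
    simp only [decide_eq_true_eq]
    omega
  · intro a ha
    rw [mem_range'_1] at ha
    exact decide_eq_true (by omega)

theorem filter_eq_and_filter_not_eq_nil_iff (p : ℕ → Bool) {u w : List ℕ} (hu : ∀ a ∈ u, p a) :
    w.filter p = u ∧ w.filter (!p ·) = [] ↔ w = u := by
  constructor
  · rintro ⟨rfl, h⟩
    exact (filter_eq_self.mpr (by simpa [filter_eq_nil_iff] using h)).symm
  · rintro rfl
    simp_all [filter_eq_nil_iff]

end List

theorem isPerm_iff {n : ℕ} {σ : List ℕ} : IsPerm n σ ↔ σ.Nodup ∧ ∀ x, x ∈ σ ↔ 1 ≤ x ∧ x ≤ n := by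
  rw [IsPerm]
  constructor
  · intro h
    refine ⟨h.nodup_iff.mpr List.nodup_range', fun x => ?_⟩
    rw [h.mem_iff, List.mem_range'_1]
    omega
  · rintro ⟨hσ, hmem⟩
    refine (List.perm_ext_iff_of_nodup hσ List.nodup_range').mpr fun x => ?_
    rw [hmem, List.mem_range'_1]
    omega

theorem IsPerm.nodup {n : ℕ} {σ : List ℕ} (h : IsPerm n σ) : σ.Nodup := (isPerm_iff.mp h).1

theorem IsPerm.length_eq {n : ℕ} {σ : List ℕ} (h : IsPerm n σ) : σ.length = n := by
  simpa using List.Perm.length_eq h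

theorem nodup_permsOf (n : ℕ) : (permsOf n).Nodup := List.nodup_permutations _ List.nodup_range'

theorem mem_permsOf {n : ℕ} {σ : List ℕ} : σ ∈ permsOf n ↔ IsPerm n σ := List.mem_permutations

def letterRank (u : List ℕ) (x : ℕ) : ℕ := u.countP (· < x) + 1

theorem std_eq_map_letterRank {u : List ℕ} (hu : u.Nodup) : std u = u.map (letterRank u) := by
  refine List.ext_getElem (by simp [std]) fun i h _ => ?_
  simp only [std, List.length_map, List.length_range] at h
  simp only [std, List.getElem_map, List.getElem_range, letterRank, ← List.countP_eq_length_filter,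
    ← List.countP_getD_range u]
  congr 1
  refine List.countP_congr fun j hj => ?_
  rw [List.mem_range] at hj
  simp only [decide_eq_true_eq, List.getD_eq_getElem _ _ h, List.getD_eq_getElem _ _ hj,
    hu.getElem_inj_iff]
  omega

theorem strictMonoOn_letterRank (u : List ℕ) : StrictMonoOn (letterRank u) {x | x ∈ u} := by
  intro x hx y _ hxy
  have hsub : (u.filter (· < x)).Sublist (u.filter (· < y)) :=
    List.monotone_filter_right u fun a h => by
      simp only [decide_eq_true_eq] at h ⊢
      omega
  have hne : u.filter (· < x) ≠ u.filter (· < y) := fun h =>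
    (by simp : x ∉ u.filter (· < x)) (h ▸ List.mem_filter.mpr ⟨hx, by simpa⟩)
  simp only [letterRank, List.countP_eq_length_filter, add_lt_add_iff_right]
  exact lt_of_le_of_ne hsub.length_le fun h => hne (hsub.eq_of_length h)

theorem letterRank_le_length {u : List ℕ} {x : ℕ} (hx : x ∈ u) : letterRank u x ≤ u.length :=
  List.countP_lt_length_iff.mpr ⟨x, hx, by simp⟩

theorem isPerm_std {u : List ℕ} (hu : u.Nodup) : IsPerm u.length (std u) := by
  rw [std_eq_map_letterRank hu]
  have hnd : (u.map (letterRank u)).Nodup := hu.map_on (strictMonoOn_letterRank u).injOn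
  refine (hnd.subperm fun r hr => ?_).perm_of_length_le (by simp)
  obtain ⟨x, hx, rfl⟩ := List.mem_map.mp hr
  rw [List.mem_range'_1]
  exact ⟨Nat.le_add_left _ _, by simpa [add_comm] using letterRank_le_length hx⟩

theorem IsPerm.std_eq {n : ℕ} {σ : List ℕ} (h : IsPerm n σ) : std σ = σ := by
  rw [std_eq_map_letterRank h.nodup]
  refine (List.map_congr_left fun x hx => ?_).trans (List.map_id σ)
  have hx' := (isPerm_iff.mp h).2 x |>.mp hx
  rw [letterRank, h.countP_eq, List.countP_lt_range'_one hx'.1 (by omega), id]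
  omega

theorem std_map_of_strictMonoOn {u : List ℕ} (hu : u.Nodup) {f : ℕ → ℕ}
    (hf : StrictMonoOn f {x | x ∈ u}) : std (u.map f) = std u := by
  rw [std_eq_map_letterRank hu, std_eq_map_letterRank (hu.map_on hf.injOn), List.map_map]
  refine List.map_congr_left fun x hx => ?_
  simp only [Function.comp_apply, letterRank, List.countP_map, Nat.add_right_cancel_iff]
  exact List.countP_congr fun y hy => by simp [hf.lt_iff_lt hy hx]

theorem eq_of_perm_of_std_eq {u u' : List ℕ} (hu : u.Nodup) (hperm : u.Perm u')
    (hstd : std u = std u') : u = u' := by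
  have hrank : letterRank u' = letterRank u := funext fun x => by simp [letterRank, hperm.countP_eq]
  rw [std_eq_map_letterRank hu, std_eq_map_letterRank (hperm.nodup_iff.mp hu), hrank] at hstd
  refine List.ext_getElem hperm.length_eq fun i h h' => (strictMonoOn_letterRank u).injOn
    (List.getElem_mem h) (hperm.mem_iff.mpr (List.getElem_mem h')) ?_
  have := List.getElem_of_eq hstd (by simpa using h)
  simpa using this

theorem exists_perm_std_eq {u : List ℕ} (hu : u.Nodup) {α : List ℕ} (hα : IsPerm u.length α) :
    ∃ u', u'.Perm u ∧ std u' = α := by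
  set w := u.toFinset.sort (· ≤ ·)
  have hw : w.SortedLT := Finset.sortedLT_sort _
  have hwu : w.Perm u :=
    List.perm_of_nodup_nodup_toFinset_eq (Finset.sort_nodup _ _) hu (by simp [w])
  have hlen : w.length = u.length := hwu.length_eq
  have hg : StrictMonoOn (fun r => w.getD (r - 1) 0) {r | r ∈ α} := by
    intro r hr s hs hrs
    have hr' := (isPerm_iff.mp hα).2 r |>.mp hr
    have hs' := (isPerm_iff.mp hα).2 s |>.mp hs
    simp only [List.getD_eq_getElem _ _ (show r - 1 < w.length by omega),
      List.getD_eq_getElem _ _ (show s - 1 < w.length by omega), hw.getElem_lt_getElem_iff]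
    omega
  refine ⟨α.map fun r => w.getD (r - 1) 0, ?_, ?_⟩
  · refine ((List.Perm.map _ hα).trans (List.Perm.of_eq ?_)).trans hwu
    exact List.ext_getElem (by simp [hlen]) fun i _ h => by simp [h]
  · rw [std_map_of_strictMonoOn hα.nodup hg, hα.std_eq]

theorem mem_shuffles_iff (p : ℕ → Bool) {u v : List ℕ} (hu : ∀ a ∈ u, p a)
    (hv : ∀ b ∈ v, p b = false) {w : List ℕ} :
    w ∈ shuffles u v ↔ w.filter p = u ∧ w.filter (!p ·) = v := by
  induction u, v using shuffles.induct generalizing w with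
  | case1 v =>
    have := List.filter_eq_and_filter_not_eq_nil_iff (!p ·) (w := w) (by simpa using hv)
    simp only [Bool.not_not] at this
    rw [shuffles, List.mem_singleton, ← this, and_comm]
  | case2 u hu0 =>
    rw [shuffles.eq_2 u hu0, List.mem_singleton, List.filter_eq_and_filter_not_eq_nil_iff p hu]
  | case3 a u b v ih₁ ih₂ =>
    have ih₁ := @ih₁ (fun x hx => hu x (.tail _ hx)) hv
    have ih₂ := @ih₂ hu (fun x hx => hv x (.tail _ hx))
    rw [shuffles, List.mem_append, List.mem_map, List.mem_map]
    cases w with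
    | nil => simp
    | cons c w =>
      by_cases hc : p c
      · have : b ≠ c := by rintro rfl; simp_all
        simp [hc, ih₁, this, eq_comm, and_comm, and_assoc]
      · have : a ≠ c := by rintro rfl; simp_all
        simp [hc, ih₂, this, eq_comm, and_left_comm]

theorem nodup_shuffles (p : ℕ → Bool) {u v : List ℕ} (hu : ∀ a ∈ u, p a)
    (hv : ∀ b ∈ v, p b = false) : (shuffles u v).Nodup := by
  induction u, v using shuffles.induct with
  | case1 v => simp [shuffles]
  | case2 u hu0 => simp [shuffles.eq_2 u hu0]
  | case3 a u b v ih₁ ih₂ =>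
    have hab : a ≠ b := by rintro rfl; simp_all
    rw [shuffles]
    refine List.Nodup.append ((ih₁ (fun x hx => hu x (.tail _ hx)) hv).map List.cons_injective)
      ((ih₂ hu (fun x hx => hv x (.tail _ hx))).map List.cons_injective) ?_
    simp [List.disjoint_left, hab.symm]

def lowPart (n : ℕ) (π : List ℕ) : List ℕ := π.filter (· ≤ n)

def highPart (n : ℕ) (π : List ℕ) : List ℕ := (π.filter (n < ·)).map (· - n)

theorem isPerm_lowPart {n m : ℕ} {π : List ℕ} (h : IsPerm (n + m) π) : IsPerm n (lowPart n π) := by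
  rw [isPerm_iff] at h ⊢
  refine ⟨h.1.filter _, fun x => ?_⟩
  simp only [lowPart, List.mem_filter, h.2, decide_eq_true_eq]
  omega

theorem isPerm_highPart {n m : ℕ} {π : List ℕ} (h : IsPerm (n + m) π) :
    IsPerm m (highPart n π) := by
  rw [isPerm_iff] at h ⊢
  refine ⟨(h.1.filter _).map_on fun x hx y hy hxy => ?_, fun x => ?_⟩
  · simp only [List.mem_filter, decide_eq_true_eq] at hx hy
    omega
  · simp only [highPart, List.mem_map, List.mem_filter, h.2, decide_eq_true_eq]
    constructor
    · rintro ⟨y, ⟨hy, hny⟩, rfl⟩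
      omega
    · intro hx
      exact ⟨x + n, ⟨by omega, by omega⟩, by omega⟩

theorem IsPerm.append_map_add {n m : ℕ} {σ ν : List ℕ} (hσ : IsPerm n σ) (hν : IsPerm m ν) :
    IsPerm (n + m) (σ ++ ν.map (· + n)) := by
  have hν' : (ν.map (· + n)).Perm (List.range' (1 + 1 * n) m) := by
    simpa [add_comm, List.map_add_range'] using hν.map (· + n)
  exact (hσ.append hν').trans (List.Perm.of_eq List.range'_append)

theorem separated_of_isPerm {n m : ℕ} {σ ν : List ℕ} (hσ : IsPerm n σ) (hν : IsPerm m ν) :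
    (∀ a ∈ σ, decide (a ≤ n)) ∧ ∀ b ∈ ν.map (· + n), decide (b ≤ n) = false := by
  refine ⟨fun a ha => ?_, fun b hb => ?_⟩
  · simpa using ((isPerm_iff.mp hσ).2 a).mp ha |>.2
  · obtain ⟨c, hc, rfl⟩ := List.mem_map.mp hb
    have := ((isPerm_iff.mp hν).2 c).mp hc
    simp only [decide_eq_false_iff_not]
    omega

theorem nodup_shShuffles {n m : ℕ} {σ ν : List ℕ} (hσ : IsPerm n σ) (hν : IsPerm m ν) :
    (shShuffles σ ν).Nodup := by
  rw [shShuffles, hσ.length_eq]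
  exact nodup_shuffles _ (separated_of_isPerm hσ hν).1 (separated_of_isPerm hσ hν).2

theorem mem_shShuffles_iff {n m : ℕ} {σ ν π : List ℕ} (hσ : IsPerm n σ) (hν : IsPerm m ν) :
    π ∈ shShuffles σ ν ↔ IsPerm (n + m) π ∧ lowPart n π = σ ∧ highPart n π = ν := by
  have hfilter : π.filter (fun x => !decide (x ≤ n)) = π.filter (n < ·) :=
    List.filter_congr fun x _ => by simp only [← decide_not, not_le]
  rw [shShuffles, hσ.length_eq, mem_shuffles_iff _ (separated_of_isPerm hσ hν).1
    (separated_of_isPerm hσ hν).2, hfilter]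
  constructor
  · rintro ⟨h₁, h₂⟩
    refine ⟨?_, h₁, by simp [highPart, h₂, Function.comp_def]⟩
    refine (List.filter_append_perm (fun x => decide (x ≤ n)) π).symm.trans ?_
    rw [hfilter, h₁, h₂]
    exact hσ.append_map_add hν
  · rintro ⟨-, h₁, h₂⟩
    refine ⟨h₁, ?_⟩
    rw [← h₂, highPart, List.map_map]
    refine ((List.map_congr_left fun x hx => ?_).trans (List.map_id _)).symm
    simp only [List.mem_filter, decide_eq_true_eq] at hx
    simp only [Function.comp_apply, id]
    omega

noncomputable def shuffleSum (σ ν : List ℕ) : FQSym :=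
  ((shShuffles σ ν).map fun π => Finsupp.single π 1).sum

noncomputable def fqMulₗ : FQSym →ₗ[ℚ] FQSym →ₗ[ℚ] FQSym :=
  Finsupp.linearCombination ℚ fun σ => Finsupp.linearCombination ℚ (shuffleSum σ)

theorem fqMulₗ_apply (x y : FQSym) : fqMulₗ x y = fqMul x y := by
  simp [fqMulₗ, fqMul, shuffleSum, Finsupp.linearCombination_apply, Finsupp.sum, Finset.smul_sum,
    List.smul_sum, Function.comp_def, mul_comm, -Finsupp.single_mul]

theorem fqMulₗ_single_single (σ ν : List ℕ) :
    fqMulₗ (Finsupp.single σ 1) (Finsupp.single ν 1) = shuffleSum σ ν := by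
  simp [fqMulₗ]

noncomputable def fqTensorₗ : FQSym →ₗ[ℚ] FQSym →ₗ[ℚ] FQSym2 :=
  Finsupp.linearCombination ℚ fun σ => Finsupp.linearCombination ℚ fun ν => Finsupp.single (σ, ν) 1

theorem fqTensorₗ_apply (x y : FQSym) : fqTensorₗ x y = fqTensor x y := by
  simp [fqTensorₗ, fqTensor, Finsupp.linearCombination_apply, Finsupp.sum, Finset.smul_sum]

noncomputable def deconcatSum (σ : List ℕ) : FQSym2 :=
  ((List.range (σ.length + 1)).map fun i => Finsupp.single (std (σ.take i), std (σ.drop i)) 1).sum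

noncomputable def fqCoprodₗ : FQSym →ₗ[ℚ] FQSym2 := Finsupp.linearCombination ℚ deconcatSum

theorem fqCoprodₗ_apply (x : FQSym) : fqCoprodₗ x = fqCoprod x := by
  simp [fqCoprodₗ, fqCoprod, deconcatSum, Finsupp.linearCombination_apply, List.smul_sum,
    Function.comp_def]

theorem sum_mem_span_of_saturated {R M α : Type*} [Semiring R] [AddCommMonoid M] [Module R M]
    {r : α → α → Prop} [DecidableRel r] (hr : Equivalence r) {S T : Finset α} (hST : S ⊆ T)
    (hsat : ∀ a ∈ S, ∀ b ∈ T, r a b → b ∈ S) (f : α → M) :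
    ∑ a ∈ S, f a ∈ Submodule.span R ((fun a => ∑ b ∈ T with r a b, f b) '' T) := by
  rw [Finset.sum_partition ⟨r, hr⟩]
  refine Submodule.sum_mem _ fun q hq => ?_
  obtain ⟨a, ha, rfl⟩ := Finset.mem_image.mp hq
  have hclass : {b ∈ S | (⟦b⟧ : Quotient ⟨r, hr⟩) = ⟦a⟧} = {b ∈ T | r a b} := by
    ext b
    simp only [Finset.mem_filter, Quotient.eq]
    exact ⟨fun ⟨hb, hba⟩ => ⟨hST hb, hr.symm hba⟩,
      fun ⟨hb, hab⟩ => ⟨hsat a ha b hb hab, hr.symm hab⟩⟩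
  rw [hclass]
  exact Submodule.subset_span ⟨a, hST ha, rfl⟩

noncomputable def classOf (E : List ℕ → List ℕ → Prop) (n : ℕ) (σ : List ℕ) : Finset (List ℕ) :=
  {τ ∈ (permsOf n).toFinset | E σ τ}

theorem mem_classOf {E : List ℕ → List ℕ → Prop} {n : ℕ} {σ τ : List ℕ} :
    τ ∈ classOf E n σ ↔ IsPerm n τ ∧ E σ τ := by
  simp [classOf, mem_permsOf]

theorem Pclass_eq_sum (E : List ℕ → List ℕ → Prop) (n : ℕ) (σ : List ℕ) :
    Pclass E n σ = ∑ τ ∈ classOf E n σ, Finsupp.single τ 1 := by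
  rw [Pclass, ← List.sum_toFinset _ ((nodup_permsOf n).filter _)]
  congr 1
  ext τ
  simp [classOf]

def IsCongruence (E : List ℕ → List ℕ → Prop) : Prop :=
  ∀ u u' v v', E u u' → E v v' → E (u ++ v) (u' ++ v')

def RestrictionCompatible (E : List ℕ → List ℕ → Prop) : Prop :=
  ∀ I : Set ℕ, (∀ a b c : ℕ, a ∈ I → c ∈ I → a ≤ b → b ≤ c → b ∈ I) →
    ∀ u v, E u v → E (u.filter fun x => decide (x ∈ I)) (v.filter fun x => decide (x ∈ I))

def DestandardizationCompatible (E : List ℕ → List ℕ → Prop) : Prop :=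
  ∀ u v, E u v ↔ (E (std u) (std v) ∧ ∀ a, u.count a = v.count a)

def classSums (E : List ℕ → List ℕ → Prop) : Set FQSym :=
  {x | ∃ n σ, IsPerm n σ ∧ x = Pclass E n σ}

def classTensors (E : List ℕ → List ℕ → Prop) : Set FQSym2 :=
  {z | ∃ n σ m τ, IsPerm n σ ∧ IsPerm m τ ∧ z = fqTensor (Pclass E n σ) (Pclass E m τ)}

theorem rel_lowPart {E : List ℕ → List ℕ → Prop} (hrestr : RestrictionCompatible E)
    (n : ℕ) {u v : List ℕ} (h : E u v) : E (lowPart n u) (lowPart n v) := by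
  simpa [lowPart] using hrestr (Set.Iic n) (fun a b c _ hc _ hbc => hbc.trans hc) u v h

theorem std_highPart (n : ℕ) {u : List ℕ} (hu : u.Nodup) :
    std (highPart n u) = std (u.filter (n < ·)) :=
  std_map_of_strictMonoOn (hu.filter _) fun x hx y hy hxy => by
    simp only [Set.mem_ofPred_eq, List.mem_filter, decide_eq_true_eq] at hx hy
    omega

theorem rel_highPart {E : List ℕ → List ℕ → Prop} (hrestr : RestrictionCompatible E)
    (hdest : DestandardizationCompatible E) (n : ℕ) {u v : List ℕ} (hu : u.Nodup) (hv : v.Nodup)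
    (h : E u v) : E (highPart n u) (highPart n v) := by
  have hfilter := (hdest _ _).mp <| by
    simpa using hrestr (Set.Ioi n) (fun a b c ha _ hab _ => lt_of_lt_of_le ha hab) u v h
  refine (hdest _ _).mpr ⟨?_, fun a => ?_⟩
  · rw [std_highPart n hu, std_highPart n hv]
    exact hfilter.1
  · exact ((List.perm_iff_count.mpr hfilter.2).map _).count_eq a

theorem fqMul_Pclass_eq_sum (E : List ℕ → List ℕ → Prop) (n m : ℕ) (σ ν : List ℕ) :
    fqMul (Pclass E n σ) (Pclass E m ν) =
      ∑ π ∈ (permsOf (n + m)).toFinset with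
        (lowPart n π, highPart n π) ∈ classOf E n σ ×ˢ classOf E m ν, Finsupp.single π 1 := by
  rw [Pclass_eq_sum, Pclass_eq_sum, ← fqMulₗ_apply]
  simp only [map_sum, LinearMap.sum_apply, fqMulₗ_single_single]
  rw [Finset.sum_comm, ← Finset.sum_product',
    ← Finset.sum_fiberwise_of_maps_to fun π hπ => (Finset.mem_filter.mp hπ).2]
  refine Finset.sum_congr rfl fun ⟨σ', ν'⟩ hz => ?_
  obtain ⟨hσ', hν'⟩ := Finset.mem_product.mp hz
  have hσ' := (mem_classOf.mp hσ').1
  have hν' := (mem_classOf.mp hν').1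
  rw [shuffleSum, ← List.sum_toFinset _ (nodup_shShuffles hσ' hν')]
  congr 1
  ext π
  simp only [List.mem_toFinset, mem_shShuffles_iff hσ' hν', Finset.mem_filter, mem_permsOf,
    Prod.mk.injEq]
  constructor
  · rintro ⟨h, rfl, rfl⟩
    exact ⟨⟨h, hz⟩, rfl, rfl⟩
  · rintro ⟨⟨h, -⟩, h₁, h₂⟩
    exact ⟨h, h₁, h₂⟩

theorem fqMul_Pclass_mem_span {E : List ℕ → List ℕ → Prop} (hE : Equivalence E)
    (hrestr : RestrictionCompatible E) (hdest : DestandardizationCompatible E) (n m : ℕ)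
    (σ ν : List ℕ) : fqMul (Pclass E n σ) (Pclass E m ν) ∈ Submodule.span ℚ (classSums E) := by
  rw [fqMul_Pclass_eq_sum]
  refine Submodule.span_mono ?_ (sum_mem_span_of_saturated hE (Finset.filter_subset _ _) ?_ _)
  · rintro _ ⟨τ, hτ, rfl⟩
    exact ⟨n + m, τ, by simpa [mem_permsOf] using hτ, (Pclass_eq_sum E _ τ).symm⟩
  · intro π hπ τ hτ hπτ
    simp only [Finset.mem_filter, List.mem_toFinset, mem_permsOf, Finset.mem_product,
      mem_classOf] at hπ hτ ⊢
    obtain ⟨hπ, ⟨-, hlow⟩, -, hhigh⟩ := hπ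
    exact ⟨hτ, ⟨isPerm_lowPart hτ, hE.trans hlow (rel_lowPart hrestr n hπτ)⟩, isPerm_highPart hτ,
      hE.trans hhigh (rel_highPart hrestr hdest n hπ.nodup hτ.nodup hπτ)⟩

def deconcat (i : ℕ) (π : List ℕ) : List ℕ × List ℕ := (std (π.take i), std (π.drop i))

def letterSets (i : ℕ) (π : List ℕ) : Finset ℕ × Finset ℕ :=
  ((π.take i).toFinset, (π.drop i).toFinset)

theorem fqTensor_Pclass_eq_sum (E : List ℕ → List ℕ → Prop) (n m : ℕ) (σ τ : List ℕ) :
    fqTensor (Pclass E n σ) (Pclass E m τ) =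
      ∑ z ∈ (permsOf n).toFinset ×ˢ (permsOf m).toFinset with E σ z.1 ∧ E τ z.2,
        Finsupp.single z 1 := by
  have hclasses : {z ∈ (permsOf n).toFinset ×ˢ (permsOf m).toFinset | E σ z.1 ∧ E τ z.2} =
      classOf E n σ ×ˢ classOf E m τ := by
    ext z
    simp [classOf, and_and_and_comm]
  rw [hclasses, Pclass_eq_sum, Pclass_eq_sum, ← fqTensorₗ_apply, Finset.sum_product,
    Finset.sum_comm]
  simp [map_sum, LinearMap.sum_apply, fqTensorₗ]

theorem fqCoprod_Pclass_eq_sum (E : List ℕ → List ℕ → Prop) (N : ℕ) (σ : List ℕ) :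
    fqCoprod (Pclass E N σ) =
      ∑ i ∈ Finset.range (N + 1), ∑ π ∈ classOf E N σ, Finsupp.single (deconcat i π) 1 := by
  rw [Pclass_eq_sum, ← fqCoprodₗ_apply, map_sum, Finset.sum_comm]
  refine Finset.sum_congr rfl fun π hπ => ?_
  rw [fqCoprodₗ, Finsupp.linearCombination_single, one_smul, deconcatSum,
    (mem_classOf.mp hπ).1.length_eq, ← List.sum_toFinset _ List.nodup_range, List.toFinset_range]
  rfl

theorem isPerm_deconcat {N i : ℕ} {π : List ℕ} (hπ : IsPerm N π) (hi : i ≤ N) :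
    IsPerm i (deconcat i π).1 ∧ IsPerm (N - i) (deconcat i π).2 := by
  have h₁ := isPerm_std (hπ.nodup.sublist (List.take_sublist i π))
  have h₂ := isPerm_std (hπ.nodup.sublist (List.drop_sublist i π))
  simp only [List.length_take, List.length_drop, hπ.length_eq, min_eq_left hi] at h₁ h₂
  exact ⟨h₁, h₂⟩

theorem eq_of_letterSets_eq_of_deconcat_eq {i : ℕ} {π π' : List ℕ} (hπ : π.Nodup)
    (hπ' : π'.Nodup) (hl : letterSets i π = letterSets i π') (hd : deconcat i π = deconcat i π') :
    π = π' := by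
  simp only [letterSets, deconcat, Prod.mk.injEq] at hl hd
  have htake := eq_of_perm_of_std_eq (hπ.sublist (List.take_sublist i π))
    (List.perm_of_nodup_nodup_toFinset_eq (hπ.sublist (List.take_sublist i π))
      (hπ'.sublist (List.take_sublist i π')) hl.1) hd.1
  have hdrop := eq_of_perm_of_std_eq (hπ.sublist (List.drop_sublist i π))
    (List.perm_of_nodup_nodup_toFinset_eq (hπ.sublist (List.drop_sublist i π))
      (hπ'.sublist (List.drop_sublist i π')) hl.2) hd.2
  rw [← List.take_append_drop i π, ← List.take_append_drop i π', htake, hdrop]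

theorem exists_rel_std_eq {E : List ℕ → List ℕ → Prop} (hdest : DestandardizationCompatible E)
    {u α : List ℕ} (hu : u.Nodup) (hα : IsPerm u.length α) (h : E (std u) α) :
    ∃ u', u'.Perm u ∧ std u' = α ∧ E u u' := by
  obtain ⟨u', hperm, hstd⟩ := exists_perm_std_eq hu hα
  exact ⟨u', hperm, hstd, (hdest _ _).mpr ⟨hstd ▸ h, fun a => hperm.symm.count_eq a⟩⟩

theorem exists_mem_classOf_deconcat_eq {E : List ℕ → List ℕ → Prop} (hE : Equivalence E)
    (hcong : IsCongruence E) (hdest : DestandardizationCompatible E) {N i : ℕ} {σ π α β : List ℕ}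
    (hi : i ≤ N) (hπ : π ∈ classOf E N σ) (hα : IsPerm i α) (hβ : IsPerm (N - i) β)
    (h₁ : E (std (π.take i)) α) (h₂ : E (std (π.drop i)) β) :
    ∃ π' ∈ classOf E N σ, letterSets i π' = letterSets i π ∧ deconcat i π' = (α, β) := by
  obtain ⟨hπN, hσπ⟩ := mem_classOf.mp hπ
  have hlen₁ : (π.take i).length = i := by simp [hπN.length_eq, hi]
  have hlen₂ : (π.drop i).length = N - i := by simp [hπN.length_eq]
  obtain ⟨u, hu, hstdu, hEu⟩ :=
    exists_rel_std_eq hdest (hπN.nodup.sublist (List.take_sublist i π)) (by rwa [hlen₁]) h₁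
  obtain ⟨v, hv, hstdv, hEv⟩ :=
    exists_rel_std_eq hdest (hπN.nodup.sublist (List.drop_sublist i π)) (by rwa [hlen₂]) h₂
  have hperm : (u ++ v).Perm π := by simpa using hu.append hv
  have hlen : u.length = i := hu.length_eq.trans hlen₁
  refine ⟨u ++ v, mem_classOf.mpr ⟨hperm.trans hπN, hE.trans hσπ ?_⟩, ?_, ?_⟩
  · simpa using hcong _ _ _ _ hEu hEv
  · simp [letterSets, ← hlen, List.toFinset_eq_of_perm _ _ hu, List.toFinset_eq_of_perm _ _ hv]
  · simp [deconcat, ← hlen, hstdu, hstdv]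

theorem sum_single_deconcat_mem_span {E : List ℕ → List ℕ → Prop} (hE : Equivalence E)
    (hcong : IsCongruence E) (hdest : DestandardizationCompatible E) {N i : ℕ} (hi : i ≤ N)
    (σ : List ℕ) :
    ∑ π ∈ classOf E N σ, Finsupp.single (deconcat i π) (1 : ℚ) ∈
      Submodule.span ℚ (classTensors E) := by
  rw [← Finset.sum_fiberwise_of_maps_to (g := letterSets i)
    fun π hπ => Finset.mem_image_of_mem _ hπ]
  refine Submodule.sum_mem _ fun K _ => ?_
  rw [← Finset.sum_image (f := fun z => Finsupp.single z (1 : ℚ)) fun π hπ π' hπ' h =>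
    eq_of_letterSets_eq_of_deconcat_eq (mem_classOf.mp (Finset.mem_filter.mp hπ).1).1.nodup
      (mem_classOf.mp (Finset.mem_filter.mp hπ').1).1.nodup
      ((Finset.mem_filter.mp hπ).2.trans (Finset.mem_filter.mp hπ').2.symm) h]
  have hr : Equivalence fun z w : List ℕ × List ℕ => E z.1 w.1 ∧ E z.2 w.2 :=
    ⟨fun _ => ⟨hE.refl _, hE.refl _⟩, fun h => ⟨hE.symm h.1, hE.symm h.2⟩,
      fun h h' => ⟨hE.trans h.1 h'.1, hE.trans h.2 h'.2⟩⟩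
  refine Submodule.span_mono ?_ (sum_mem_span_of_saturated hr
    (T := (permsOf i).toFinset ×ˢ (permsOf (N - i)).toFinset) ?_ ?_ _)
  · rintro _ ⟨z, hz, rfl⟩
    simp only [Finset.coe_product, Set.mem_prod, Finset.mem_coe, List.mem_toFinset,
      mem_permsOf] at hz
    exact ⟨i, z.1, N - i, z.2, hz.1, hz.2, (fqTensor_Pclass_eq_sum E i (N - i) z.1 z.2).symm⟩
  · intro z hz
    obtain ⟨π, hπ, rfl⟩ := Finset.mem_image.mp hz
    have hπN := (mem_classOf.mp (Finset.mem_filter.mp hπ).1).1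
    simpa [deconcat, mem_permsOf] using isPerm_deconcat hπN hi
  · intro z hz w hw hzw
    obtain ⟨π, hπ, rfl⟩ := Finset.mem_image.mp hz
    obtain ⟨hπC, hπK⟩ := Finset.mem_filter.mp hπ
    simp only [Finset.mem_product, List.mem_toFinset, mem_permsOf] at hw
    obtain ⟨π', hπ', hl, hd⟩ :=
      exists_mem_classOf_deconcat_eq hE hcong hdest hi hπC hw.1 hw.2 hzw.1 hzw.2
    exact Finset.mem_image.mpr ⟨π', Finset.mem_filter.mpr ⟨hπ', hl.trans hπK⟩, hd⟩

theorem fqCoprod_Pclass_mem_span {E : List ℕ → List ℕ → Prop} (hE : Equivalence E)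
    (hcong : IsCongruence E) (hdest : DestandardizationCompatible E) (N : ℕ) (σ : List ℕ) :
    fqCoprod (Pclass E N σ) ∈ Submodule.span ℚ (classTensors E) := by
  rw [fqCoprod_Pclass_eq_sum]
  exact Submodule.sum_mem _ fun i hi =>
    sum_single_deconcat_mem_span hE hcong hdest (Nat.lt_succ_iff.mp (Finset.mem_range.mp hi)) σ

theorem fqMul_mem_span_classSums {E : List ℕ → List ℕ → Prop} (hE : Equivalence E)
    (hrestr : RestrictionCompatible E) (hdest : DestandardizationCompatible E) {x y : FQSym}
    (hx : x ∈ Submodule.span ℚ (classSums E)) (hy : y ∈ Submodule.span ℚ (classSums E)) :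
    fqMul x y ∈ Submodule.span ℚ (classSums E) := by
  have hmem := Submodule.apply_mem_map₂ fqMulₗ hx hy
  rw [Submodule.map₂_span_span, fqMulₗ_apply] at hmem
  refine Submodule.span_le.mpr ?_ hmem
  rintro _ ⟨_, ⟨n, σ, -, rfl⟩, _, ⟨m, ν, -, rfl⟩, rfl⟩
  simpa only [SetLike.mem_coe, fqMulₗ_apply] using fqMul_Pclass_mem_span hE hrestr hdest n m σ ν

theorem fqCoprod_mem_span_classTensors {E : List ℕ → List ℕ → Prop} (hE : Equivalence E)
    (hcong : IsCongruence E) (hdest : DestandardizationCompatible E) {x : FQSym}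
    (hx : x ∈ Submodule.span ℚ (classSums E)) :
    fqCoprod x ∈ Submodule.span ℚ (classTensors E) := by
  rw [← fqCoprodₗ_apply]
  refine Submodule.span_le.mpr ?_ (Submodule.apply_mem_span_image_of_mem_span fqCoprodₗ hx)
  rintro _ ⟨_, ⟨n, σ, -, rfl⟩, rfl⟩
  simpa only [SetLike.mem_coe, fqCoprodₗ_apply] using fqCoprod_Pclass_mem_span hE hcong hdest n σ

/-- the Hivert–Nzeutchap criterion: a congruence compatible with
restriction to alphabet intervals and with destandardization yields, by summing
the fundamental basis over its classes of permutations, a Hopf subalgebra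
of FQSym. -/
theorem hivert_nzeutchap (E : List ℕ → List ℕ → Prop) (hE : Equivalence E)
    (hcong : ∀ u u' v v', E u u' → E v v' → E (u ++ v) (u' ++ v'))
    (hrestr : ∀ I : Set ℕ, (∀ a b c : ℕ, a ∈ I → c ∈ I → a ≤ b → b ≤ c → b ∈ I) →
      ∀ u v, E u v →
        E (u.filter fun x => decide (x ∈ I)) (v.filter fun x => decide (x ∈ I)))
    (hdest : ∀ u v, E u v ↔ (E (std u) (std v) ∧ ∀ a, u.count a = v.count a)) :
    (∀ x ∈ Submodule.span ℚ {x : FQSym | ∃ n σ, IsPerm n σ ∧ x = Pclass E n σ},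
     ∀ y ∈ Submodule.span ℚ {x : FQSym | ∃ n σ, IsPerm n σ ∧ x = Pclass E n σ},
       fqMul x y ∈ Submodule.span ℚ {x : FQSym | ∃ n σ, IsPerm n σ ∧ x = Pclass E n σ}) ∧
    (∀ x ∈ Submodule.span ℚ {x : FQSym | ∃ n σ, IsPerm n σ ∧ x = Pclass E n σ},
       fqCoprod x ∈ Submodule.span ℚ
         {z : FQSym2 | ∃ n σ m τ, IsPerm n σ ∧ IsPerm m τ ∧
            z = fqTensor (Pclass E n σ) (Pclass E m τ)}) :=
  ⟨fun _ hx _ hy => fqMul_mem_span_classSums hE hrestr hdest hx hy,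
    fun _ hx => fqCoprod_mem_span_classTensors hE hcong hdest hx⟩
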